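/- If the cyclic graph Δ(G) of a finite group G has a dominating vertex, then G has a unique subgroup of order p for some prime p, and this subgroup is contained in the center of G. -/

import Mathlib

/-- The cyclic graph of a group: vertices are the nonidentity elements,
two distinct vertices are adjacent iff they generate a cyclic subgroup. -/
def cyclicGraph (G : Type*) [Group G] : SimpleGraph {g : G // g ≠ 1} where
  Adj x y := x ≠ y ∧ IsCyclic (Subgroup.closure ({x.1, y.1} : Set G))
  symm := by
    constructor
    rintro x y ⟨hne, hc⟩
    exact ⟨hne.symm, by rwa [Set.pair_comm]⟩
  loopless := by constructor; rintro x ⟨hne, -⟩; exact hne rfl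

/-- A group is a Frobenius group if it has a nontrivial proper subgroup `H`
with `H ∩ H^g = 1` for every `g ∉ H`. -/
def IsFrobenius (G : Type*) [Group G] : Prop :=
  ∃ H : Subgroup G, H ≠ ⊥ ∧ H ≠ ⊤ ∧
    ∀ g : G, g ∉ H → ∀ x : G, x ∈ H → g * x * g⁻¹ ∈ H → x = 1

/-- A group is generalized quaternion if it is isomorphic to `QuaternionGroup (2 ^ m)`
for some `m ≥ 1` (i.e. a generalized quaternion group of order `2 ^ (m + 2)`). -/
def IsGeneralizedQuaternion (P : Type*) [Group P] : Prop :=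
  ∃ m : ℕ, 1 ≤ m ∧ Nonempty (P ≃* QuaternionGroup (2 ^ m))

/-!
A dominating vertex `z` generates a cyclic subgroup together with every element, so it commutes
with everything and is central, and so is its power `a` of some prime order `p`. Any element `q`
of order `p` lies with `a` in the cyclic group `⟨z, q⟩`; a finite cyclic group has at most `p`
solutions of `x ^ p = 1`, so all of them lie in `⟨a⟩`, and `⟨q⟩ = ⟨a⟩`.
-/

open Subgroup

theorem Commute.of_isCyclic_closure_pair {G : Type*} [Group G] {x y : G}
    (h : IsCyclic (closure ({x, y} : Set G))) : Commute x y := by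
  have hx : x ∈ closure ({x, y} : Set G) := subset_closure (by simp)
  have hy : y ∈ closure ({x, y} : Set G) := subset_closure (by simp)
  exact congrArg Subtype.val
    (IsMulCommutative.is_comm.comm (⟨x, hx⟩ : closure ({x, y} : Set G)) ⟨y, hy⟩)

theorem IsCyclic.mem_zpowers_of_orderOf_dvd {α : Type*} [Group α] [Finite α] [IsCyclic α]
    {x y : α} (h : orderOf y ∣ orderOf x) : y ∈ zpowers x := by
  classical
  cases nonempty_fintype α
  set roots : Finset α := {b | b ^ orderOf x = 1}
  have hsub : (zpowers x : Set α) ⊆ roots := fun b hb => by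
    simpa [roots] using orderOf_dvd_iff_pow_eq_one.mp (orderOf_dvd_of_mem_zpowers hb)
  have hroots : (zpowers x : Set α) = roots :=
    Set.eq_of_subset_of_ncard_le hsub <| by
      rw [Set.ncard_coe_finset, ← Nat.card_coe_set_eq, SetLike.coe_sort_coe, Nat.card_zpowers]
      exact IsCyclic.card_pow_eq_one_le (orderOf_pos x)
  have hy : y ∈ (roots : Set α) := by simpa [roots] using orderOf_dvd_iff_pow_eq_one.mp h
  rwa [← hroots] at hy

theorem mem_zpowers_of_isCyclic_closure_pair {G : Type*} [Group G] [Finite G] {x y : G}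
    (h : IsCyclic (closure ({x, y} : Set G))) (hxy : orderOf y ∣ orderOf x) :
    y ∈ zpowers x := by
  have hx : x ∈ closure ({x, y} : Set G) := subset_closure (by simp)
  have hy : y ∈ closure ({x, y} : Set G) := subset_closure (by simp)
  obtain ⟨k, hk⟩ := IsCyclic.mem_zpowers_of_orderOf_dvd
    (x := (⟨x, hx⟩ : closure ({x, y} : Set G))) (y := ⟨y, hy⟩)
    (by simpa only [orderOf_mk] using hxy)
  exact ⟨k, congrArg Subtype.val hk⟩

theorem Subgroup.exists_orderOf_eq_and_zpowers_eq_of_card_prime {G : Type*} [Group G]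
    {H : Subgroup G} {p : ℕ} (hp : p.Prime) (hH : Nat.card H = p) :
    ∃ q : G, orderOf q = p ∧ zpowers q = H := by
  have : Fact p.Prime := ⟨hp⟩
  have : IsCyclic H := isCyclic_of_prime_card hH
  obtain ⟨q, hq⟩ := H.isCyclic_iff_exists_zpowers_eq_top.mp this
  exact ⟨q, by rw [← Nat.card_zpowers, hq, hH], hq⟩

theorem stmt_10 {G : Type*} [Group G] [Finite G] (z : G) (hz : z ≠ 1)
    (hdom : ∀ g : G, g ≠ 1 → g ≠ z → IsCyclic (Subgroup.closure ({z, g} : Set G))) :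
    ∃ p : ℕ, p.Prime ∧ ∃ P : Subgroup G, Nat.card P = p ∧
      P ≤ Subgroup.center G ∧ ∀ Q : Subgroup G, Nat.card Q = p → Q = P := by
  have hcyc : ∀ g : G, IsCyclic (closure ({z, g} : Set G)) := by
    intro g
    by_cases hg : g ∈ zpowers z
    · exact isCyclic_of_le <| (closure_le _).mpr <| Set.pair_subset (mem_zpowers z) hg
    · exact hdom g (fun h => hg (h ▸ one_mem _)) (fun h => hg (h ▸ mem_zpowers z))
  have hzc : z ∈ center G :=
    mem_center_iff.mpr fun g => (Commute.of_isCyclic_closure_pair (hcyc g)).eq.symm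
  obtain ⟨p, hp, hpz⟩ := Nat.exists_prime_and_dvd (orderOf_eq_one_iff.not.mpr hz)
  set a := z ^ (orderOf z / p)
  have ha : orderOf a = p := orderOf_pow_orderOf_div (orderOf_pos z).ne' hpz
  refine ⟨p, hp, zpowers a, by rw [Nat.card_zpowers, ha], zpowers_le.mpr (pow_mem hzc _), ?_⟩
  intro Q hQ
  obtain ⟨q, hq, rfl⟩ := Q.exists_orderOf_eq_and_zpowers_eq_of_card_prime hp hQ
  have haq : IsCyclic (closure ({a, q} : Set G)) :=
    have := hcyc q
    have hzC : z ∈ closure ({z, q} : Set G) := subset_closure (by simp)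
    have hqC : q ∈ closure ({z, q} : Set G) := subset_closure (by simp)
    isCyclic_of_le ((closure_le _).mpr (Set.pair_subset (pow_mem hzC _) hqC))
  have hqa : q ∈ zpowers a := mem_zpowers_of_isCyclic_closure_pair haq (by rw [ha, hq])
  exact eq_of_le_of_card_ge (zpowers_le.mpr hqa)
    (by rw [Nat.card_zpowers, Nat.card_zpowers, ha, hq])
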